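/- Let a ≥ 0 and b ≥ 1 be integers and let g = gcd(a,b). Then Σ_{i=0}^{b−1} (a·i mod b)² = b·(b − g)·(2b − g)/6. -/

import Mathlib

/-!
Write `a = c g`, `b = m g` with `c`, `m` coprime. Then `a i mod b = g (c i mod m)`; as `i` runs
over `[0, b)`, `i mod m` runs `g` times over `[0, m)`, and `j ↦ c j mod m` permutes `[0, m)`.
Hence the sum is `g ∑_{j<m} (g j)² = g³ m (m - 1) (2m - 1) / 6`.
-/

open Finset

theorem sum_range_natCast_sq (m : ℕ) :
    ∑ j ∈ range m, (j : ℚ) ^ 2 = m * (m - 1) * (2 * m - 1) / 6 := by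
  induction m with
  | zero => simp
  | succ n ih =>
    rw [sum_range_succ, ih]
    push_cast
    ring

theorem sum_range_mul_comp_mod {M : Type*} [AddCommMonoid M] (f : ℕ → M) (k m : ℕ) :
    ∑ i ∈ range (k * m), f (i % m) = k • ∑ j ∈ range m, f j := by
  induction k with
  | zero => simp
  | succ k ih =>
    rw [Nat.succ_mul, sum_range_add, ih, succ_nsmul]
    congr 1
    refine sum_congr rfl fun i hi => ?_
    rw [Nat.mul_add_mod_self_right, Nat.mod_eq_of_lt (mem_range.mp hi)]

theorem sum_range_comp_mul_mod_of_coprime {M : Type*} [AddCommMonoid M] (f : ℕ → M)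
    {c m : ℕ} (h : c.Coprime m) :
    ∑ j ∈ range m, f (c * j % m) = ∑ j ∈ range m, f j := by
  have maps : Set.MapsTo (fun j => c * j % m) (range m) (range m) := fun j hj =>
    mem_range.mpr (Nat.mod_lt _ (Nat.zero_lt_of_lt (mem_range.mp hj)))
  have inj : Set.InjOn (fun j => c * j % m) (range m) := fun i hi j hj hij =>
    (Nat.ModEq.cancel_left_of_coprime (Nat.coprime_comm.mp h) hij).eq_of_lt_of_lt
      (mem_range.mp hi) (mem_range.mp hj)
  exact sum_nbij _ maps inj (surjOn_of_injOn_of_card_le _ maps inj le_rfl) fun _ _ => rfl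

theorem sum_range_comp_mul_mod {M : Type*} [AddCommMonoid M] (f : ℕ → M) (a b : ℕ) :
    ∑ i ∈ range b, f (a * i % b) =
      Nat.gcd a b • ∑ j ∈ range (b / Nat.gcd a b), f (Nat.gcd a b * j) := by
  rcases Nat.eq_zero_or_pos b with rfl | hb
  · simp
  obtain ⟨g, c, m, hg, hcm, rfl, rfl⟩ := Nat.exists_coprime' (Nat.gcd_pos_of_pos_right a hb)
  rw [Nat.gcd_mul_right, hcm.gcd_eq_one, one_mul, Nat.mul_div_cancel m hg]
  calc ∑ i ∈ range (m * g), f (c * g * i % (m * g))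
      = ∑ i ∈ range (g * m), f (g * (c * (i % m) % m)) := by
        simp only [mul_comm _ g, mul_assoc, Nat.mul_mod_mul_left, Nat.mul_mod_mod]
    _ = g • ∑ j ∈ range m, f (g * j) := by
        rw [sum_range_mul_comp_mod (fun j => f (g * (c * j % m))),
          sum_range_comp_mul_mod_of_coprime (fun j => f (g * j)) hcm]

theorem stmt3_general (a b : ℕ) :
    (∑ i ∈ Finset.range b, ((a * i % b : ℕ) : ℚ) ^ 2)
      = (b : ℚ) * ((b : ℚ) - (Nat.gcd a b : ℚ)) * (2 * (b : ℚ) - (Nat.gcd a b : ℚ)) / 6 := by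
  rcases Nat.eq_zero_or_pos b with rfl | hb
  · simp
  rw [sum_range_comp_mul_mod (fun n : ℕ => (n : ℚ) ^ 2)]
  have hg := Nat.gcd_pos_of_pos_right a hb
  obtain ⟨m, hm⟩ := Nat.gcd_dvd_right a b
  generalize Nat.gcd a b = g at hg hm ⊢
  subst hm
  simp only [Nat.mul_div_cancel_left m hg, Nat.cast_mul, mul_pow, ← mul_sum,
    sum_range_natCast_sq, nsmul_eq_mul]
  ring

/-- `Σ_{i=0}^{b−1} (a·i mod b)² = b·(b − g)·(2b − g)/6` with `g = gcd(a,b)`. -/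
theorem stmt3 (a b : ℕ) (hb : 1 ≤ b) :
    (∑ i ∈ Finset.range b, ((a * i % b : ℕ) : ℚ) ^ 2)
      = (b : ℚ) * ((b : ℚ) - (Nat.gcd a b : ℚ)) * (2 * (b : ℚ) - (Nat.gcd a b : ℚ)) / 6 :=
  stmt3_general a b
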